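/- Let f : ℝ → ℂ be 2π-periodic and continuously differentiable, and let t ∈ ℝ. Then the principal value lim_{ε→0⁺} ∫_{{s ∈ [−π,π] : ε ≤ |s|}} cot(s/2) f(t+s) ds exists (i.e., the limit as ε → 0⁺ of these truncated integrals exists in ℂ). -/

import Mathlib

open MeasureTheory Filter

theorem stmt7 (f : ℝ → ℂ) (hper : Function.Periodic f (2 * Real.pi))
    (hf : ContDiff ℝ 1 f) (t : ℝ) :
    ∃ L : ℂ,
      Tendsto
        (fun ε : ℝ =>
          ∫ s in {s : ℝ | s ∈ Set.Icc (-Real.pi) Real.pi ∧ ε ≤ |s|},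
            (Real.cot (s / 2) : ℂ) * f (t + s))
        (nhdsWithin 0 (Set.Ioi 0)) (nhds L) := by
  have hπ : (0:ℝ) < Real.pi := Real.pi_pos
  set g : ℝ → ℂ := fun s => (Real.cot (s / 2) : ℂ) * f (t + s) with hg
  set h : ℝ → ℂ := fun s => (Real.cot (s / 2) : ℂ) * (f (t + s) - f (t - s)) with hh
  have hcot : (fun s : ℝ => Real.cot (s / 2)) =
      fun s : ℝ => Real.cos (s / 2) / Real.sin (s / 2) := by
    funext s; exact Real.cot_eq_cos_div_sin _
  -- derivative bound
  have hdc : Continuous (deriv f) := hf.continuous_deriv le_rfl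
  have hderper : Function.Periodic (deriv f) (2 * Real.pi) := by
    intro x
    have h1 : deriv (fun y => f (y + 2 * Real.pi)) x = deriv f (x + 2 * Real.pi) :=
      deriv_comp_add_const f _ x
    have h2 : (fun y => f (y + 2 * Real.pi)) = f := funext fun y => hper y
    rw [h2] at h1
    exact h1.symm
  obtain ⟨C0, hC0⟩ : ∃ C, ∀ x ∈ Set.Icc (0:ℝ) (2 * Real.pi), ‖deriv f x‖ ≤ C :=
    isCompact_Icc.exists_bound_of_continuousOn hdc.continuousOn
  set C : ℝ := max C0 0 with hCdef
  have hCnn : 0 ≤ C := le_max_right _ _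
  have hC : ∀ x, ‖deriv f x‖ ≤ C := by
    intro x
    obtain ⟨y, hy, hxy⟩ := hderper.exists_mem_Ico₀ (by positivity) x
    rw [hxy]
    exact le_trans (hC0 y ⟨hy.1, hy.2.le⟩) (le_max_left _ _)
  have hlip : LipschitzWith C.toNNReal f := by
    apply lipschitzWith_of_nnnorm_deriv_le (hf.differentiable one_ne_zero)
    intro x
    rw [← NNReal.coe_le_coe, coe_nnnorm, Real.coe_toNNReal _ hCnn]
    exact hC x
  -- bound on the difference
  have hdiffb : ∀ s : ℝ, 0 ≤ s → ‖f (t + s) - f (t - s)‖ ≤ C * (2 * s) := by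
    intro s hs
    have := hlip.dist_le_mul (t + s) (t - s)
    rw [dist_eq_norm, Real.dist_eq, Real.coe_toNNReal _ hCnn] at this
    have habs : |t + s - (t - s)| = 2 * s := by
      rw [show t + s - (t - s) = 2 * s by ring, abs_of_nonneg (by linarith)]
    rwa [habs] at this
  -- bound on cot
  have hcotb : ∀ s ∈ Set.Ioc (0:ℝ) Real.pi, |Real.cot (s / 2)| ≤ Real.pi / s := by
    intro s hs
    have hs0 : 0 < s := hs.1
    have hsin : s / Real.pi ≤ Real.sin (s / 2) := by
      have := Real.mul_le_sin (x := s / 2) (by linarith) (by linarith [hs.2])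
      have heq : 2 / Real.pi * (s / 2) = s / Real.pi := by field_simp
      linarith [heq ▸ this]
    have hsinpos : 0 < Real.sin (s / 2) := lt_of_lt_of_le (by positivity) hsin
    rw [Real.cot_eq_cos_div_sin, abs_div, abs_of_pos hsinpos,
      div_le_div_iff₀ hsinpos hs0]
    have h1 : |Real.cos (s / 2)| ≤ 1 := Real.abs_cos_le_one _
    have hs' : s ≤ Real.sin (s / 2) * Real.pi := (div_le_iff₀ hπ).1 hsin
    nlinarith [abs_nonneg (Real.cos (s / 2))]
  -- bound on h
  set M : ℝ := 2 * Real.pi * C with hM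
  have hhb : ∀ s ∈ Set.Ioc (0:ℝ) Real.pi, ‖h s‖ ≤ M := by
    intro s hs
    have hs0 : 0 < s := hs.1
    have : ‖h s‖ = |Real.cot (s / 2)| * ‖f (t + s) - f (t - s)‖ := by
      rw [hh, norm_mul, Complex.norm_real, Real.norm_eq_abs]
    rw [this]
    calc |Real.cot (s / 2)| * ‖f (t + s) - f (t - s)‖
        ≤ (Real.pi / s) * (C * (2 * s)) := by
          apply mul_le_mul (hcotb s hs) (hdiffb s hs0.le) (norm_nonneg _)
          positivity
      _ = M := by rw [hM]; field_simp
  -- measurability of h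
  have hcontf : Continuous f := hf.continuous
  have hmeas : Measurable h := by
    rw [hh]
    apply Measurable.mul
    · apply Complex.measurable_ofReal.comp
      rw [hcot]
      exact (Real.measurable_cos.comp (measurable_id.div_const 2)).div
        (Real.measurable_sin.comp (measurable_id.div_const 2))
    · exact ((hcontf.comp (continuous_const.add continuous_id)).sub
        (hcontf.comp (continuous_const.sub continuous_id))).measurable
  -- integrability of h on (0, π]
  have hInt : IntegrableOn h (Set.Ioc 0 Real.pi) := by
    apply Measure.integrableOn_of_bounded (M := M)
    · simp [Real.volume_Ioc]
    · exact hmeas.aestronglyMeasurable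
    · exact (ae_restrict_iff' measurableSet_Ioc).2 (Eventually.of_forall hhb)
  have hII : IntervalIntegrable h volume 0 Real.pi := by
    rw [intervalIntegrable_iff_integrableOn_Ioc_of_le hπ.le]; exact hInt
  -- continuity of cot away from zero in [-π, π]
  have hsinne : ∀ s : ℝ, s ∈ Set.Icc (-Real.pi) Real.pi → s ≠ 0 →
      Real.sin (s / 2) ≠ 0 := by
    intro s hs hs0
    rw [Ne, Real.sin_eq_zero_iff_of_lt_of_lt (by linarith [hs.1]) (by linarith [hs.2])]
    intro hc
    exact hs0 (by linarith)
  have hgcont : ∀ K : Set ℝ, K ⊆ Set.Icc (-Real.pi) Real.pi → (0:ℝ) ∉ K →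
      ContinuousOn g K := by
    intro K hK h0
    rw [hg]
    apply ContinuousOn.mul
    · apply Continuous.comp_continuousOn Complex.continuous_ofReal
      rw [hcot]
      apply ContinuousOn.div
      · exact (Real.continuous_cos.comp (continuous_id.div_const 2)).continuousOn
      · exact (Real.continuous_sin.comp (continuous_id.div_const 2)).continuousOn
      · intro s hs
        exact hsinne s (hK hs) (fun hc => h0 (hc ▸ hs))
    · exact (hcontf.comp (continuous_const.add continuous_id)).continuousOn
  -- the truncated integral equals an interval integral of h
  have key : ∀ ε ∈ Set.Ioo (0:ℝ) Real.pi,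
      (∫ s in {s : ℝ | s ∈ Set.Icc (-Real.pi) Real.pi ∧ ε ≤ |s|}, g s)
        = ∫ s in ε..Real.pi, h s := by
    intro ε hε
    have hε0 : 0 < ε := hε.1
    have hεπ : ε < Real.pi := hε.2
    have hset : {s : ℝ | s ∈ Set.Icc (-Real.pi) Real.pi ∧ ε ≤ |s|}
        = Set.Icc (-Real.pi) (-ε) ∪ Set.Icc ε Real.pi := by
      ext s
      simp only [Set.mem_setOf_eq, Set.mem_Icc, Set.mem_union, le_abs]
      constructor
      · rintro ⟨⟨h1, h2⟩, h3 | h3⟩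
        · right; exact ⟨h3, h2⟩
        · left; exact ⟨h1, by linarith⟩
      · rintro (⟨h1, h2⟩ | ⟨h1, h2⟩)
        · exact ⟨⟨h1, by linarith⟩, Or.inr (by linarith)⟩
        · exact ⟨⟨by linarith, h2⟩, Or.inl h1⟩
    have hg1 : IntegrableOn g (Set.Icc (-Real.pi) (-ε)) := by
      apply (hgcont _ ?_ ?_).integrableOn_compact isCompact_Icc
      · intro s hs; exact ⟨hs.1, by linarith [hs.2]⟩
      · intro hc; linarith [hc.2]
    have hg2 : IntegrableOn g (Set.Icc ε Real.pi) := by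
      apply (hgcont _ ?_ ?_).integrableOn_compact isCompact_Icc
      · intro s hs; exact ⟨by linarith [hs.1], hs.2⟩
      · intro hc; linarith [hc.1]
    have hdisj : Disjoint (Set.Icc (-Real.pi) (-ε)) (Set.Icc ε Real.pi) := by
      rw [Set.disjoint_left]
      intro s hs1 hs2
      linarith [hs1.2, hs2.1]
    rw [hset, setIntegral_union hdisj measurableSet_Icc hg1 hg2]
    -- convert to interval integrals
    rw [MeasureTheory.integral_Icc_eq_integral_Ioc, MeasureTheory.integral_Icc_eq_integral_Ioc,
      ← intervalIntegral.integral_of_le (by linarith : -Real.pi ≤ -ε),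
      ← intervalIntegral.integral_of_le (by linarith : ε ≤ Real.pi)]
    have hneg : (∫ s in ε..Real.pi, g (-s)) = ∫ s in (-Real.pi)..(-ε), g s :=
      intervalIntegral.integral_comp_neg g
    rw [← hneg]
    have hgc2 : IntervalIntegrable g volume ε Real.pi := by
      apply ContinuousOn.intervalIntegrable
      rw [Set.uIcc_of_le (by linarith)]
      apply hgcont
      · intro s hs; exact ⟨by linarith [hs.1], hs.2⟩
      · intro hc; linarith [hc.1]
    have hgc1 : IntervalIntegrable (fun s => g (-s)) volume ε Real.pi := by
      apply ContinuousOn.intervalIntegrable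
      rw [Set.uIcc_of_le (by linarith)]
      have : ContinuousOn g (Set.Icc (-Real.pi) (-ε)) := by
        apply hgcont
        · intro s hs; exact ⟨hs.1, by linarith [hs.2]⟩
        · intro hc; linarith [hc.2]
      apply this.comp continuous_neg.continuousOn
      intro s hs
      simp only [Set.mem_Icc] at hs ⊢
      constructor <;> linarith
    rw [← intervalIntegral.integral_add hgc1 hgc2]
    apply intervalIntegral.integral_congr
    intro s _
    have hcotneg : Real.cot (-s / 2) = -Real.cot (s / 2) := by
      rw [Real.cot_eq_cos_div_sin, Real.cot_eq_cos_div_sin]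
      rw [show -s / 2 = -(s / 2) by ring, Real.cos_neg, Real.sin_neg]
      ring
    simp only [hg, hh, hcotneg]
    push_cast
    rw [show t + -s = t - s by ring]
    ring
  -- the limit
  refine ⟨∫ s in (0:ℝ)..Real.pi, h s, ?_⟩
  have hsmall : Tendsto (fun ε : ℝ => ∫ s in (0:ℝ)..ε, h s)
      (nhdsWithin 0 (Set.Ioi 0)) (nhds 0) := by
    rw [tendsto_zero_iff_norm_tendsto_zero]
    apply squeeze_zero' (Eventually.of_forall fun ε => norm_nonneg _)
      (g := fun ε => M * |ε|)
    · filter_upwards [Ioo_mem_nhdsGT_of_mem (Set.mem_Ico.2 ⟨le_refl 0, hπ⟩)] with ε hε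
      have := intervalIntegral.norm_integral_le_of_norm_le_const (C := M)
        (f := h) (a := 0) (b := ε) ?_
      · simpa using this
      · intro x hx
        rw [Set.uIoc_of_le hε.1.le] at hx
        exact hhb x ⟨hx.1, le_trans hx.2 hε.2.le⟩
    · have : Tendsto (fun ε : ℝ => M * |ε|) (nhds 0) (nhds (M * |0|)) :=
        (continuous_const.mul (continuous_abs)).tendsto 0
      simpa using this.mono_left nhdsWithin_le_nhds
  have htail : Tendsto (fun ε : ℝ => ∫ s in ε..Real.pi, h s)
      (nhdsWithin 0 (Set.Ioi 0)) (nhds (∫ s in (0:ℝ)..Real.pi, h s)) := by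
    have heq : ∀ ε ∈ Set.Ioo (0:ℝ) Real.pi,
        (∫ s in ε..Real.pi, h s)
          = (∫ s in (0:ℝ)..Real.pi, h s) - ∫ s in (0:ℝ)..ε, h s := by
      intro ε hε
      have h1 : IntervalIntegrable h volume 0 ε := by
        apply hII.mono_set
        rw [Set.uIcc_of_le hε.1.le, Set.uIcc_of_le hπ.le]
        exact Set.Icc_subset_Icc le_rfl hε.2.le
      have h2 : IntervalIntegrable h volume ε Real.pi := by
        apply hII.mono_set
        rw [Set.uIcc_of_le hε.2.le, Set.uIcc_of_le hπ.le]
        exact Set.Icc_subset_Icc hε.1.le le_rfl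
      have := intervalIntegral.integral_add_adjacent_intervals h1 h2
      linear_combination this
    have hlim : Tendsto (fun ε : ℝ =>
        (∫ s in (0:ℝ)..Real.pi, h s) - ∫ s in (0:ℝ)..ε, h s)
        (nhdsWithin 0 (Set.Ioi 0)) (nhds (∫ s in (0:ℝ)..Real.pi, h s)) := by
      simpa using tendsto_const_nhds.sub hsmall
    apply hlim.congr'
    filter_upwards [Ioo_mem_nhdsGT_of_mem (Set.mem_Ico.2 ⟨le_refl 0, hπ⟩)] with ε hε
    exact (heq ε hε).symm
  apply htail.congr'
  filter_upwards [Ioo_mem_nhdsGT_of_mem (Set.mem_Ico.2 ⟨le_refl 0, hπ⟩)] with ε hε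
  exact (key ε hε).symm
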